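/- arXiv:2003.12534 — 4 statements merged into one kernel-verified Lean document; each statement's English description precedes it below -/
import Mathlib

section
/- Let F : ℝ^d → ℝ be bounded, nonnegative, radial, with ∫ F = 1, and suppose |F(v) - γ/|v|^{d+2s}| ≤ C/|v|^{d+4s} for all |v| ≥ 1, where s ∈ (0,1), γ, C > 0. Define F₁(w) = ∫₀^∞ e^{-ν₀ τ} ν₀² τ^{-d} F(w/τ) dτ and G(w) = F₁(w) - γ₁/|w|^{d+2s} with γ₁ = γ ν₀^{1-2s} Γ(2s+1). Then there is a constant C' > 0 such that |G(w)| ≤ C'/|w|^{d+2s} for all 0 < |w| ≤ 1, and |G(w)| ≤ C'/|w|^{d+4s} for all |w| > 1. -/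
open MeasureTheory Real Set

/-!
The tail hypothesis together with `0 ≤ F ≤ M` bounds the deviation `F v - γ ‖v‖^{-(d+2s)}` by
`K ‖v‖^{-(d+e)}` for every `v ≠ 0` and every `e ∈ [2s, 4s]`. Integrated against the kernel, a power
law becomes a power law: the scaling `τ^{-d} ‖τ⁻¹ w‖^{-(d+e)} = τ^e ‖w‖^{-(d+e)}` reduces the
`τ`-integral to `∫ τ^e e^{-ν₀ τ} dτ = Γ(e+1) / ν₀^{e+1}`. With `e = 2s` this is exactly the
subtracted term `γ₁ ‖w‖^{-(d+2s)}`; applied to the deviation, `e = 2s` bounds `G` near the origin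
and `e = 4s` at infinity.
-/

lemma integrableOn_rpow_mul_exp_neg_mul {p b : ℝ} (hp : -1 < p) (hb : 0 < b) :
    IntegrableOn (fun τ : ℝ => τ ^ p * exp (-b * τ)) (Ioi 0) := by
  simpa using integrableOn_rpow_mul_exp_neg_mul_rpow hp one_pos hb

lemma integral_rpow_mul_exp_neg_mul {p b : ℝ} (hp : -1 < p) (hb : 0 < b) :
    ∫ τ in Ioi 0, τ ^ p * exp (-b * τ) = Gamma (p + 1) / b ^ (p + 1) := by
  have h := integral_rpow_mul_exp_neg_mul_Ioi (a := p + 1) (by linarith) hb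
  simp only [add_sub_cancel_right, ← neg_mul] at h
  rw [h, one_div, inv_rpow hb.le, inv_mul_eq_div]

noncomputable def jumpKernel (ν d τ : ℝ) : ℝ := exp (-ν * τ) * ν ^ 2 * τ ^ (-d)

variable {E : Type*} [NormedAddCommGroup E] [NormedSpace ℝ E]

lemma jumpKernel_mul_div_norm_inv_smul_rpow {τ : ℝ} (hτ : 0 < τ) (w : E) (ν c d e : ℝ) :
    jumpKernel ν d τ * (c / ‖τ⁻¹ • w‖ ^ (d + e))
      = c * ν ^ 2 / ‖w‖ ^ (d + e) * (τ ^ e * exp (-ν * τ)) := by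
  have hscale : τ ^ (-d) * τ ^ (d + e) = τ ^ e := by
    rw [← rpow_add hτ]; ring_nf
  rw [norm_smul, norm_inv, norm_of_nonneg hτ.le, inv_mul_eq_div,
    div_rpow (norm_nonneg w) hτ.le, div_div_eq_mul_div, jumpKernel, ← hscale]
  ring

lemma rpow_two_div_rpow_add_one {ν : ℝ} (hν : 0 < ν) (e : ℝ) :
    ν ^ 2 / ν ^ (e + 1) = ν ^ (1 - e) := by
  rw [← rpow_two, ← rpow_sub hν]; ring_nf

lemma measurable_jumpKernel (ν d : ℝ) : Measurable (jumpKernel ν d) := by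
  unfold jumpKernel; fun_prop

lemma norm_jumpKernel_mul_le {ν d e c τ : ℝ} {φ : E → ℝ} {w : E} (hw : w ≠ 0)
    (hφ : ∀ v ≠ 0, |φ v| ≤ c / ‖v‖ ^ (d + e)) (hτ : τ ∈ Ioi 0) :
    ‖jumpKernel ν d τ * φ (τ⁻¹ • w)‖ ≤ jumpKernel ν d τ * (c / ‖τ⁻¹ • w‖ ^ (d + e)) := by
  have hτ : 0 < τ := hτ
  have hK : 0 ≤ jumpKernel ν d τ := by unfold jumpKernel; positivity
  rw [norm_mul, norm_of_nonneg hK]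
  exact mul_le_mul_of_nonneg_left (hφ _ (smul_ne_zero (inv_ne_zero hτ.ne') hw)) hK

section

variable {ν : ℝ} (hν : 0 < ν) {d e : ℝ} (he : -1 < e)
include hν he

lemma integrableOn_jumpKernel_mul_div_norm_rpow (w : E) (c : ℝ) :
    IntegrableOn (fun τ => jumpKernel ν d τ * (c / ‖τ⁻¹ • w‖ ^ (d + e))) (Ioi 0) :=
  IntegrableOn.congr_fun ((integrableOn_rpow_mul_exp_neg_mul he hν).const_mul _)
    (fun _ hτ => (jumpKernel_mul_div_norm_inv_smul_rpow hτ w ν c d e).symm) measurableSet_Ioi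

lemma integral_jumpKernel_mul_div_norm_rpow (w : E) (c : ℝ) :
    ∫ τ in Ioi 0, jumpKernel ν d τ * (c / ‖τ⁻¹ • w‖ ^ (d + e))
      = c * ν ^ (1 - e) * Gamma (e + 1) / ‖w‖ ^ (d + e) := by
  rw [setIntegral_congr_fun measurableSet_Ioi
      (fun τ hτ => jumpKernel_mul_div_norm_inv_smul_rpow hτ w ν c d e),
    integral_const_mul, integral_rpow_mul_exp_neg_mul he hν,
    ← rpow_two_div_rpow_add_one hν e]
  ring

variable {φ : E → ℝ} {w : E} {c : ℝ} (hw : w ≠ 0) (hφ : ∀ v ≠ 0, |φ v| ≤ c / ‖v‖ ^ (d + e))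
include hw hφ

lemma integrableOn_jumpKernel_mul_of_abs_le [MeasurableSpace E] [BorelSpace E]
    (hφm : Measurable φ) :
    IntegrableOn (fun τ => jumpKernel ν d τ * φ (τ⁻¹ • w)) (Ioi 0) :=
  (integrableOn_jumpKernel_mul_div_norm_rpow hν he w c).mono'
    ((measurable_jumpKernel ν d).mul (hφm.comp (by fun_prop))).aestronglyMeasurable
    ((ae_restrict_iff' measurableSet_Ioi).2 (.of_forall fun _ => norm_jumpKernel_mul_le hw hφ))

lemma abs_integral_jumpKernel_mul_le :
    |∫ τ in Ioi 0, jumpKernel ν d τ * φ (τ⁻¹ • w)|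
      ≤ c * ν ^ (1 - e) * Gamma (e + 1) / ‖w‖ ^ (d + e) := by
  rw [← integral_jumpKernel_mul_div_norm_rpow hν he w c, ← norm_eq_abs]
  exact norm_integral_le_of_norm_le (integrableOn_jumpKernel_mul_div_norm_rpow hν he w c)
    ((ae_restrict_iff' measurableSet_Ioi).2 (.of_forall fun _ => norm_jumpKernel_mul_le hw hφ))

end

lemma abs_integral_jumpKernel_mul_sub_le [MeasurableSpace E] [BorelSpace E] {ν d a e γ c : ℝ}
    (hν : 0 < ν) (ha : -1 < a) (he : -1 < e) {φ : E → ℝ} (hφm : Measurable φ) {w : E}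
    (hw : w ≠ 0) (hφ : ∀ v ≠ 0, |φ v - γ / ‖v‖ ^ (d + a)| ≤ c / ‖v‖ ^ (d + e)) :
    |(∫ τ in Ioi 0, jumpKernel ν d τ * φ (τ⁻¹ • w))
        - γ * ν ^ (1 - a) * Gamma (a + 1) / ‖w‖ ^ (d + a)|
      ≤ c * ν ^ (1 - e) * Gamma (e + 1) / ‖w‖ ^ (d + e) := by
  have hpow := integrableOn_jumpKernel_mul_div_norm_rpow hν ha (d := d) w γ
  have hdev := integrableOn_jumpKernel_mul_of_abs_le hν he hw hφ (hφm.sub (by fun_prop))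
  have hφ_int : IntegrableOn (fun τ => jumpKernel ν d τ * φ (τ⁻¹ • w)) (Ioi 0) :=
    (hdev.add hpow).congr_fun (fun τ _ => by simp only [Pi.add_apply]; ring) measurableSet_Ioi
  rw [← integral_jumpKernel_mul_div_norm_rpow hν ha, ← integral_sub hφ_int hpow]
  simpa only [← mul_sub] using abs_integral_jumpKernel_mul_le hν he hw hφ

lemma abs_sub_div_rpow_le_of_tail {x y M γ C a b c : ℝ} (hx : 0 < x) (hy : y ∈ Icc 0 M)
    (hγ : 0 ≤ γ) (hC : 0 ≤ C) (ha : 0 ≤ a) (hac : a ≤ c) (hcb : c ≤ b)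
    (htail : 1 ≤ x → |y - γ / x ^ a| ≤ C / x ^ b) :
    |y - γ / x ^ a| ≤ (C + M + γ) / x ^ c := by
  have hM : 0 ≤ M := hy.1.trans hy.2
  rcases le_or_gt 1 x with h1 | h1
  · calc |y - γ / x ^ a| ≤ C / x ^ b := htail h1
      _ ≤ C / x ^ c := by gcongr
      _ ≤ (C + M + γ) / x ^ c := by gcongr; linarith
  · have hxc : x ^ c ≤ 1 := rpow_le_one hx.le h1.le (ha.trans hac)
    calc |y - γ / x ^ a| ≤ |y| + |γ / x ^ a| := abs_sub _ _
      _ ≤ M / x ^ c + γ / x ^ c := by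
        rw [abs_of_nonneg hy.1, abs_of_nonneg (by positivity)]
        exact add_le_add (hy.2.trans (le_div_self hM (by positivity) hxc))
          (div_le_div_of_nonneg_left hγ (by positivity) (rpow_le_rpow_of_exponent_ge hx h1.le hac))
      _ ≤ (C + M + γ) / x ^ c := by rw [← add_div]; gcongr; linarith

theorem stmt1_general (d : ℕ) (s γ C ν₀ : ℝ) (hs : s ∈ Set.Ioo (0:ℝ) 1)
    (hγ : 0 < γ) (hC : 0 < C) (hν : 0 < ν₀)
    (F : EuclideanSpace ℝ (Fin d) → ℝ)
    (hFmeas : Measurable F)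
    (hFbdd : ∃ M, ∀ v, F v ≤ M)
    (hFpos : ∀ v, 0 ≤ F v)
    (hFtail : ∀ v : EuclideanSpace ℝ (Fin d), 1 ≤ ‖v‖ →
      |F v - γ / ‖v‖ ^ ((d : ℝ) + 2 * s)| ≤ C / ‖v‖ ^ ((d : ℝ) + 4 * s))
    (F₁ G : EuclideanSpace ℝ (Fin d) → ℝ)
    (hF₁ : ∀ w, F₁ w = ∫ τ in Set.Ioi (0:ℝ),
      Real.exp (-ν₀ * τ) * ν₀ ^ 2 * τ ^ (-(d:ℝ)) * F (τ⁻¹ • w))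
    (hG : ∀ w, G w = F₁ w
      - γ * ν₀ ^ (1 - 2*s) * Real.Gamma (2*s+1) / ‖w‖ ^ ((d:ℝ) + 2*s)) :
    ∃ C' > (0:ℝ), ∀ w : EuclideanSpace ℝ (Fin d),
      (0 < ‖w‖ → ‖w‖ ≤ 1 → |G w| ≤ C' / ‖w‖ ^ ((d:ℝ) + 2*s)) ∧
      (1 < ‖w‖ → |G w| ≤ C' / ‖w‖ ^ ((d:ℝ) + 4*s)) := by
  have hs0 := hs.1
  obtain ⟨M, hM⟩ := hFbdd
  set K := C + M + γ
  have hK : 0 < K := by linarith [hFpos 0, hM 0]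
  have hG_bound : ∀ e, 2 * s ≤ e → e ≤ 4 * s → ∀ w ≠ 0,
      |G w| ≤ K * ν₀ ^ (1 - e) * Gamma (e + 1) / ‖w‖ ^ ((d : ℝ) + e) := fun e h2 h4 w hw => by
    rw [hG, hF₁]
    refine abs_integral_jumpKernel_mul_sub_le hν (by linarith) (by linarith) hFmeas hw
      fun v hv => ?_
    exact abs_sub_div_rpow_le_of_tail (norm_pos_iff.2 hv) ⟨hFpos v, hM v⟩ hγ.le hC.le
      (by positivity) (by linarith) (by linarith) (hFtail v)
  have hA : ∀ e, 2 * s ≤ e → 0 < ν₀ ^ (1 - e) * Gamma (e + 1) := fun e h =>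
    mul_pos (rpow_pos_of_pos hν _) (Gamma_pos_of_pos (by linarith))
  refine ⟨K * (ν₀ ^ (1 - 2 * s) * Gamma (2 * s + 1) + ν₀ ^ (1 - 4 * s) * Gamma (4 * s + 1)),
    mul_pos hK (add_pos (hA _ le_rfl) (hA _ (by linarith))),
    fun w => ⟨fun hw _ => ?_, fun hw => ?_⟩⟩
  · refine (hG_bound _ le_rfl (by linarith) w (norm_pos_iff.1 hw)).trans ?_
    rw [mul_assoc]
    exact div_le_div_of_nonneg_right (mul_le_mul_of_nonneg_left
      (le_add_of_nonneg_right (hA _ (by linarith)).le) hK.le) (by positivity)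
  · refine (hG_bound _ (by linarith) le_rfl w (norm_pos_iff.1 (by linarith))).trans ?_
    rw [mul_assoc]
    exact div_le_div_of_nonneg_right (mul_le_mul_of_nonneg_left
      (le_add_of_nonneg_left (hA _ le_rfl).le) hK.le) (by positivity)

/-- Deviation estimate for the kernel `F₁` against the pure power law:
`|G(w)| ≤ C'/|w|^{d+2s}` for `0 < |w| ≤ 1` and `|G(w)| ≤ C'/|w|^{d+4s}` for `|w| > 1`. -/
theorem stmt1 (d : ℕ) (hd : 1 ≤ d) (s γ C ν₀ : ℝ) (hs : s ∈ Set.Ioo (0:ℝ) 1)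
    (hγ : 0 < γ) (hC : 0 < C) (hν : 0 < ν₀)
    (F : EuclideanSpace ℝ (Fin d) → ℝ)
    (hFmeas : Measurable F)
    (hFbdd : ∃ M, ∀ v, F v ≤ M)
    (hFpos : ∀ v, 0 ≤ F v)
    (hFrad : ∀ v w : EuclideanSpace ℝ (Fin d), ‖v‖ = ‖w‖ → F v = F w)
    (hFi : Integrable F)
    (hFint : ∫ v, F v = 1)
    (hFtail : ∀ v : EuclideanSpace ℝ (Fin d), 1 ≤ ‖v‖ →
      |F v - γ / ‖v‖ ^ ((d : ℝ) + 2 * s)| ≤ C / ‖v‖ ^ ((d : ℝ) + 4 * s))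
    (F₁ G : EuclideanSpace ℝ (Fin d) → ℝ)
    (hF₁ : ∀ w, F₁ w = ∫ τ in Set.Ioi (0:ℝ),
      Real.exp (-ν₀ * τ) * ν₀ ^ 2 * τ ^ (-(d:ℝ)) * F (τ⁻¹ • w))
    (hG : ∀ w, G w = F₁ w
      - γ * ν₀ ^ (1 - 2*s) * Real.Gamma (2*s+1) / ‖w‖ ^ ((d:ℝ) + 2*s)) :
    ∃ C' > (0:ℝ), ∀ w : EuclideanSpace ℝ (Fin d),
      (0 < ‖w‖ → ‖w‖ ≤ 1 → |G w| ≤ C' / ‖w‖ ^ ((d:ℝ) + 2*s)) ∧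
      (1 < ‖w‖ → |G w| ≤ C' / ‖w‖ ^ ((d:ℝ) + 4*s)) :=
  stmt1_general d s γ C ν₀ hs hγ hC hν F hFmeas hFbdd hFpos hFtail F₁ G hF₁ hG
end

section
/- Let s ∈ (1/2, 1), d ≥ 1, C > 0, and ε, x_d, α satisfy 0 < ε < 1, 0 < x_d < ε^{1-α}, 0 < α < 1. If G : ℝ^d → [0,∞) satisfies G(v) ≤ C/|v|^{d+2s} for |v| ≤ 1 and G(v) ≤ C/|v|^{d+4s} for |v| > 1, then ∫_{{v : ε^{-1} x_d < v_d < ε^{-α}}} v_d G(v) dv ≤ C' ( (ε^{-1} x_d)^{1-2s} + 1 ), for a constant C' depending only on d, s, C. -/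
/-!
On the region of integration `0 < ε⁻¹ x_d < v_d ≤ ‖v‖`, and the far-field decay of `G` is faster
than the near-field one, so the integrand is at most `C ‖v‖^{-(d+2s)}` on `{‖v‖ > ε⁻¹ x_d}`.
In `ℝⁿ` the substitution `x = a • y` shows that `∫_{‖x‖ > a} ‖x‖^{-r} = a^{n-r} ∫_{‖x‖ > 1} ‖x‖^{-r}`,
and the last integral is finite for `r > n`. Taking `n = d + 1` and `r = d + 2s`, where `r > n`
exactly because `s > 1/2`, bounds the integral by a constant times `(ε⁻¹ x_d)^{1-2s}`.
-/

open MeasureTheory Real Set Module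
open scoped ENNReal

section
variable {E : Type*} [NormedAddCommGroup E] [NormedSpace ℝ E] [FiniteDimensional ℝ E]
  [MeasurableSpace E] [BorelSpace E] (μ : Measure E) [μ.IsAddHaarMeasure]

theorem lintegral_comp_inv_smul_of_pos (f : E → ℝ≥0∞) {R : ℝ} (hR : 0 < R) :
    ∫⁻ x, f (R⁻¹ • x) ∂μ = ENNReal.ofReal (R ^ finrank ℝ E) * ∫⁻ x, f x ∂μ := by
  have hR' : R⁻¹ ≠ 0 := inv_ne_zero hR.ne'
  rw [← (measurableEmbedding_const_smul₀ hR').lintegral_map, Measure.map_addHaar_smul μ hR',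
    lintegral_smul_measure, inv_pow, inv_inv, abs_of_pos (pow_pos hR _), smul_eq_mul]

theorem setLIntegral_rpow_neg_norm_gt (r : ℝ) {a : ℝ} (ha : 0 < a) :
    ∫⁻ x in {x : E | a < ‖x‖}, ENNReal.ofReal (‖x‖ ^ (-r)) ∂μ =
      ENNReal.ofReal (a ^ ((finrank ℝ E : ℝ) - r)) *
        ∫⁻ x in {x : E | 1 < ‖x‖}, ENNReal.ofReal (‖x‖ ^ (-r)) ∂μ := by
  have hmeas (b : ℝ) : MeasurableSet {x : E | b < ‖x‖} :=
    measurableSet_lt measurable_const continuous_norm.measurable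
  have hscale (x : E) : {x : E | a < ‖x‖}.indicator (fun x ↦ ENNReal.ofReal (‖x‖ ^ (-r))) x =
      ENNReal.ofReal (a ^ (-r)) *
        {x : E | 1 < ‖x‖}.indicator (fun x ↦ ENNReal.ofReal (‖x‖ ^ (-r))) (a⁻¹ • x) := by
    have hnorm : ‖a⁻¹ • x‖ = a⁻¹ * ‖x‖ := by rw [norm_smul, norm_inv, norm_of_nonneg ha.le]
    have hmem : a⁻¹ • x ∈ {x : E | 1 < ‖x‖} ↔ x ∈ {x : E | a < ‖x‖} := by
      simp only [mem_ofPred_eq, hnorm, lt_inv_mul_iff₀ ha, mul_one]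
    by_cases hx : x ∈ {x : E | a < ‖x‖}
    · rw [indicator_of_mem hx, indicator_of_mem (hmem.2 hx), ← ENNReal.ofReal_mul (by positivity),
        hnorm, mul_rpow (by positivity) (norm_nonneg x), inv_rpow ha.le, ← rpow_neg ha.le, neg_neg,
        ← mul_assoc, ← rpow_add ha, neg_add_cancel, rpow_zero, one_mul]
    · rw [indicator_of_notMem hx, indicator_of_notMem (mt hmem.1 hx), mul_zero]
  rw [← lintegral_indicator (hmeas a), ← lintegral_indicator (hmeas 1)]
  simp_rw [hscale]
  rw [lintegral_const_mul' _ _ ENNReal.ofReal_ne_top,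
    lintegral_comp_inv_smul_of_pos μ
      ({x : E | 1 < ‖x‖}.indicator fun x ↦ ENNReal.ofReal (‖x‖ ^ (-r))) ha,
    ← mul_assoc, ← ENNReal.ofReal_mul (by positivity), ← rpow_natCast, ← rpow_add ha,
    neg_add_eq_sub]

theorem setLIntegral_rpow_neg_norm_gt_one_lt_top {r : ℝ} (hr : (finrank ℝ E : ℝ) < r) :
    ∫⁻ x in {x : E | 1 < ‖x‖}, ENNReal.ofReal (‖x‖ ^ (-r)) ∂μ < ∞ := by
  have hr₀ : 0 ≤ r := (Nat.cast_nonneg _).trans hr.le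
  have hle : ∀ x ∈ {x : E | 1 < ‖x‖},
      ENNReal.ofReal (‖x‖ ^ (-r)) ≤ ENNReal.ofReal (2 ^ r) * ENNReal.ofReal ((1 + ‖x‖) ^ (-r)) := by
    intro x hx
    rw [← ENNReal.ofReal_mul (by positivity)]
    refine ENNReal.ofReal_le_ofReal ?_
    calc ‖x‖ ^ (-r) ≤ ((1 + ‖x‖) / 2) ^ (-r) :=
          rpow_le_rpow_of_nonpos (by positivity) (by linarith [hx.out]) (neg_nonpos.2 hr₀)
      _ = 2 ^ r * (1 + ‖x‖) ^ (-r) := by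
          rw [div_rpow (by positivity) zero_le_two, rpow_neg zero_le_two, div_inv_eq_mul, mul_comm]
  calc ∫⁻ x in {x : E | 1 < ‖x‖}, ENNReal.ofReal (‖x‖ ^ (-r)) ∂μ
      ≤ ∫⁻ x in {x : E | 1 < ‖x‖}, ENNReal.ofReal (2 ^ r) * ENNReal.ofReal ((1 + ‖x‖) ^ (-r)) ∂μ :=
        setLIntegral_mono (by fun_prop) hle
    _ ≤ ∫⁻ x, ENNReal.ofReal (2 ^ r) * ENNReal.ofReal ((1 + ‖x‖) ^ (-r)) ∂μ :=
        setLIntegral_le_lintegral _ _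
    _ < ∞ := by
        rw [lintegral_const_mul' _ _ ENNReal.ofReal_ne_top]
        exact ENNReal.mul_lt_top ENNReal.ofReal_lt_top (finite_integral_one_add_norm hr)

theorem setIntegral_le_of_abs_le_rpow_neg_norm {f : E → ℝ} {s : Set E} {C r a : ℝ} (hC : 0 ≤ C)
    (hr : (finrank ℝ E : ℝ) < r) (ha : 0 < a) (hs : s ⊆ {x | a < ‖x‖})
    (hf : ∀ x ∈ s, |f x| ≤ C * ‖x‖ ^ (-r)) :
    ∫ x in s, f x ∂μ ≤
      C * (∫⁻ x in {x : E | 1 < ‖x‖}, ENNReal.ofReal (‖x‖ ^ (-r)) ∂μ).toReal *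
        a ^ ((finrank ℝ E : ℝ) - r) := by
  have htail : ∫⁻ x in {x : E | a < ‖x‖}, ENNReal.ofReal (C * ‖x‖ ^ (-r)) ∂μ =
      ENNReal.ofReal C * (ENNReal.ofReal (a ^ ((finrank ℝ E : ℝ) - r)) *
        ∫⁻ x in {x : E | 1 < ‖x‖}, ENNReal.ofReal (‖x‖ ^ (-r)) ∂μ) := by
    simp_rw [ENNReal.ofReal_mul hC]
    rw [lintegral_const_mul' _ _ ENNReal.ofReal_ne_top, setLIntegral_rpow_neg_norm_gt μ r ha]
  have hfin := setLIntegral_rpow_neg_norm_gt_one_lt_top μ hr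
  calc ∫ x in s, f x ∂μ ≤ ‖∫ x in s, f x ∂μ‖ := le_norm_self _
    _ ≤ (∫⁻ x in s, ENNReal.ofReal ‖f x‖ ∂μ).toReal := norm_integral_le_lintegral_norm _
    _ ≤ (∫⁻ x in {x : E | a < ‖x‖}, ENNReal.ofReal (C * ‖x‖ ^ (-r)) ∂μ).toReal := by
        refine ENNReal.toReal_mono (by rw [htail]; finiteness) ?_
        calc ∫⁻ x in s, ENNReal.ofReal ‖f x‖ ∂μ
            ≤ ∫⁻ x in s, ENNReal.ofReal (C * ‖x‖ ^ (-r)) ∂μ :=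
              setLIntegral_mono (by fun_prop) fun x hx ↦ ENNReal.ofReal_le_ofReal (hf x hx)
          _ ≤ _ := lintegral_mono_set hs
    _ = _ := by
        rw [htail, ENNReal.toReal_mul, ENNReal.toReal_mul, ENNReal.toReal_ofReal hC,
          ENNReal.toReal_ofReal (by positivity)]
        ring

end

theorem le_div_rpow_of_le_one_of_one_lt {E : Type*} [NormedAddCommGroup E] {G : E → ℝ}
    {C p p' : ℝ} (hC : 0 ≤ C) (hp : p ≤ p')
    (hG₁ : ∀ v, v ≠ 0 → ‖v‖ ≤ 1 → G v ≤ C / ‖v‖ ^ p) (hG₂ : ∀ v, 1 < ‖v‖ → G v ≤ C / ‖v‖ ^ p')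
    {v : E} (hv : v ≠ 0) : G v ≤ C / ‖v‖ ^ p := by
  rcases le_or_gt ‖v‖ 1 with h | h
  · exact hG₁ v hv h
  · exact (hG₂ v h).trans <| div_le_div_of_nonneg_left hC (by positivity) <|
      rpow_le_rpow_of_exponent_le h.le hp

theorem abs_mul_le_mul_rpow_neg {t g ρ C p : ℝ} (ht : 0 ≤ t) (htρ : t ≤ ρ) (hρ : 0 < ρ)
    (hg₀ : 0 ≤ g) (hg : g ≤ C / ρ ^ (p + 1)) : |t * g| ≤ C * ρ ^ (-p) := by
  rw [abs_of_nonneg (mul_nonneg ht hg₀)]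
  calc t * g ≤ ρ * (C / ρ ^ (p + 1)) := mul_le_mul htρ hg hg₀ hρ.le
    _ = C * ρ ^ (-p) := by
        rw [rpow_neg hρ.le, rpow_add hρ, rpow_one]
        field_simp

/-- Boundary-layer estimate: for `1/2 < s < 1` and `0 < x_d < ε^{1-α}`,
`∫_{ε⁻¹ x_d < v_d < ε^{-α}} v_d G(v) dv ≤ C'((ε⁻¹ x_d)^{1-2s} + 1)`. -/
theorem stmt16 (d : ℕ) (s C : ℝ) (hs : s ∈ Set.Ioo (1/2 : ℝ) 1) (hC : 0 < C) :
    ∃ C' > (0:ℝ), ∀ ε xd α : ℝ, 0 < ε → ε < 1 → 0 < xd → xd < ε ^ (1 - α) →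
      0 < α → α < 1 →
      ∀ G : EuclideanSpace ℝ (Fin (d+1)) → ℝ, Measurable G → (∀ v, 0 ≤ G v) →
        (∀ v : EuclideanSpace ℝ (Fin (d+1)), v ≠ 0 → ‖v‖ ≤ 1 →
          G v ≤ C / ‖v‖ ^ ((d:ℝ) + 1 + 2*s)) →
        (∀ v : EuclideanSpace ℝ (Fin (d+1)), 1 < ‖v‖ →
          G v ≤ C / ‖v‖ ^ ((d:ℝ) + 1 + 4*s)) →
        ∫ v in {v : EuclideanSpace ℝ (Fin (d+1)) |
            ε⁻¹ * xd < v (Fin.last d) ∧ v (Fin.last d) < ε ^ (-α)},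
          v (Fin.last d) * G v
        ≤ C' * ((ε⁻¹ * xd) ^ (1 - 2*s) + 1) := by
  obtain ⟨hs₁, -⟩ := hs
  set K := (∫⁻ v in {v : EuclideanSpace ℝ (Fin (d+1)) | 1 < ‖v‖},
    ENNReal.ofReal (‖v‖ ^ (-((d:ℝ) + 2*s)))).toReal
  have hK : 0 ≤ C * K := by positivity
  refine ⟨C * K + 1, by positivity, ?_⟩
  intro ε xd α hε _ hxd _ _ _ G _ hG₀ hG₁ hG₂
  have ha : 0 < ε⁻¹ * xd := by positivity
  have hr : (finrank ℝ (EuclideanSpace ℝ (Fin (d+1))) : ℝ) < d + 2*s := by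
    rw [finrank_euclideanSpace_fin]; push_cast; linarith
  have hlast (v : EuclideanSpace ℝ (Fin (d+1))) : v (Fin.last d) ≤ ‖v‖ :=
    (le_abs_self _).trans (PiLp.norm_apply_le v _)
  have hbound := setIntegral_le_of_abs_le_rpow_neg_norm volume hC.le hr ha
    (f := fun v ↦ v (Fin.last d) * G v)
    (s := {v | ε⁻¹ * xd < v (Fin.last d) ∧ v (Fin.last d) < ε ^ (-α)})
    (fun v hv ↦ hv.1.trans_le (hlast v)) (fun v hv ↦ ?_)
  · rw [finrank_euclideanSpace_fin] at hbound
    calc _ ≤ C * K * (ε⁻¹ * xd) ^ (1 - 2*s) := by convert hbound using 3; push_cast; ring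
      _ ≤ _ := by nlinarith [rpow_nonneg ha.le (1 - 2*s)]
  · have hv₀ : 0 < v (Fin.last d) := ha.trans hv.1
    have hv : 0 < ‖v‖ := hv₀.trans_le (hlast v)
    refine abs_mul_le_mul_rpow_neg hv₀.le (hlast v) hv (hG₀ v) ?_
    convert le_div_rpow_of_le_one_of_one_lt hC.le (by linarith) hG₁ hG₂ (norm_pos_iff.1 hv)
      using 3
    ring
end

section
/- Let ν₀ > 0 and define, for x ∈ ℝ^d_+ and v ∈ ℝ^d with v_d < 0, τ_f^ε(x,v) = -x_d/(ε v_d). Then ν₀ e^{-ν₀ τ_f^ε(x,v)} = ∫_{τ_f^ε(x,v)}^∞ ν₀² e^{-ν₀ τ} dτ, and consequently, for any bounded measurable ψ and the extension ψ̃(x+εv, v) := ψ(x+εv) if x+εv ∈ Ω and ψ̃(x+εv,v) := ψ(x_f(x,εv)) otherwise, one has ∫_{ℝ^d} [∫₀^{τ_f^ε} ν₀² e^{-ν₀τ}(ψ(x+ετv)-ψ(x))dτ + ν₀ e^{-ν₀ τ_f^ε}(ψ(x_f)-ψ(x))] F(v) dv = ∫_{ℝ^d} (ψ̃(x+εv,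 v) - ψ(x)) F₁(v) dv, where F₁(v) = ∫₀^∞ e^{-ν₀τ} ν₀² τ^{-d} F(v/τ) dτ. -/
/-!
The exit term is the tail `∫_{τ_f}^∞ ν₀² e^{-ν₀τ} dτ` of the exponential law times the value of `ψ`
at the exit point. Hence, for each `v`, bulk plus exit term is `∫_0^∞ ν₀² e^{-ν₀τ} (ψ̃ - ψ(x)) dτ`,
where `ψ̃` evaluates `ψ` along the ray `x + ετv` and freezes it at the exit point once the ray has
left the half-space. The exit point of the ray spanned by `τ v` does not depend on `τ > 0`, so
`ψ̃ = g(τ v)` for one function `g`; the substitution `v ↦ τ⁻¹ v` (Jacobian `τ^{-n}` in dimension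
`n`) and Fubini then move the `τ`-integral from `g` onto `F`, which produces `F₁`.
-/

open MeasureTheory Real Set Module

theorem integral_Ioi_sq_mul_exp_neg_mul {ν : ℝ} (hν : 0 < ν) (t : ℝ) :
    ∫ τ in Ioi t, ν ^ 2 * exp (-ν * τ) = ν * exp (-ν * t) := by
  rw [integral_const_mul, integral_exp_mul_Ioi (neg_neg_iff_pos.2 hν)]
  field_simp

section Scaling

variable {E : Type*} [NormedAddCommGroup E] [NormedSpace ℝ E] [MeasurableSpace E] [BorelSpace E]
  (μ : Measure E) {Γ : ℝ → ℝ} {g F : E → ℝ} {M : ℝ}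

theorem integrable_prod_mul_comp_smul (hΓm : Measurable Γ) (hΓ : IntegrableOn Γ (Ioi 0))
    (hg : Measurable g) (hgM : ∀ v, |g v| ≤ M) (hFm : Measurable F) (hF : Integrable F μ) :
    Integrable (Function.uncurry fun v τ => Γ τ * g (τ • v) * F v)
      (μ.prod (volume.restrict (Ioi 0))) := by
  refine ((hF.norm.const_mul M).mul_prod hΓ.norm).mono' ?_ (ae_of_all _ fun ⟨v, τ⟩ => ?_)
  · exact (((hΓm.comp measurable_snd).mul (hg.comp (measurable_snd.smul measurable_fst))).mul
      (hFm.comp measurable_fst)).aestronglyMeasurable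
  · simp only [Function.uncurry_apply_pair, norm_mul, Real.norm_eq_abs]
    calc |Γ τ| * |g (τ • v)| * |F v| ≤ |Γ τ| * M * |F v| := by gcongr; exact hgM _
      _ = M * |F v| * |Γ τ| := by ring

variable [FiniteDimensional ℝ E] [μ.IsAddHaarMeasure]

theorem integral_comp_smul_mul (g F : E → ℝ) {τ : ℝ} (hτ : 0 < τ) :
    ∫ v, g (τ • v) * F v ∂μ = τ ^ (-(finrank ℝ E : ℝ)) * ∫ v, g v * F (τ⁻¹ • v) ∂μ := by
  have h := Measure.integral_comp_inv_smul_of_nonneg μ (fun u => g (τ • u) * F u) hτ.le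
  simp only [smul_inv_smul₀ hτ.ne', smul_eq_mul] at h
  rw [h, rpow_neg hτ.le, rpow_natCast, inv_mul_cancel_left₀ (pow_pos hτ _).ne']

theorem integrable_prod_mul_comp_inv_smul (hΓm : Measurable Γ) (hΓ : IntegrableOn Γ (Ioi 0))
    (hg : Measurable g) (hgM : ∀ v, |g v| ≤ M) (hFm : Measurable F) (hF : Integrable F μ) :
    Integrable (Function.uncurry fun v τ => g v * (Γ τ * τ ^ (-(finrank ℝ E : ℝ)) * F (τ⁻¹ • v)))
      (μ.prod (volume.restrict (Ioi 0))) := by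
  have hmeas : Measurable (Function.uncurry fun v τ =>
      g v * (Γ τ * τ ^ (-(finrank ℝ E : ℝ)) * F (τ⁻¹ • v))) := by
    fun_prop
  refine (integrable_prod_iff' hmeas.aestronglyMeasurable).2 ⟨?_, ?_⟩
  · filter_upwards [ae_restrict_mem measurableSet_Ioi] with τ hτ
    simp only [Function.uncurry_apply_pair]
    exact ((hF.comp_smul (inv_ne_zero (ne_of_gt hτ))).const_mul _).bdd_mul
      hg.aestronglyMeasurable (ae_of_all _ hgM)
  · refine (integrable_prod_mul_comp_smul μ hΓm hΓ hg hgM hFm hF).integral_norm_prod_right.congr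
      ?_
    filter_upwards [ae_restrict_mem measurableSet_Ioi] with τ hτ
    simp only [Function.uncurry_apply_pair, norm_mul,
      Real.norm_of_nonneg (rpow_nonneg (le_of_lt hτ) _)]
    simp_rw [mul_assoc, integral_const_mul, integral_comp_smul_mul μ (‖g ·‖) (‖F ·‖) hτ,
      mul_left_comm ‖g _‖, integral_const_mul]

theorem integral_setIntegral_comp_smul_mul (hΓm : Measurable Γ) (hΓ : IntegrableOn Γ (Ioi 0))
    (hg : Measurable g) (hgM : ∀ v, |g v| ≤ M) (hFm : Measurable F) (hF : Integrable F μ) :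
    ∫ v, (∫ τ in Ioi 0, Γ τ * g (τ • v)) * F v ∂μ
      = ∫ v, g v * (∫ τ in Ioi 0, Γ τ * τ ^ (-(finrank ℝ E : ℝ)) * F (τ⁻¹ • v)) ∂μ := by
  calc _ = ∫ v, (∫ τ in Ioi 0, Γ τ * g (τ • v) * F v) ∂μ := by simp_rw [integral_mul_const]
    _ = ∫ τ in Ioi 0, ∫ v, Γ τ * g (τ • v) * F v ∂μ :=
      integral_integral_swap (integrable_prod_mul_comp_smul μ hΓm hΓ hg hgM hFm hF)
    _ = ∫ τ in Ioi 0, ∫ v, g v * (Γ τ * τ ^ (-(finrank ℝ E : ℝ)) * F (τ⁻¹ • v)) ∂μ := by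
      refine setIntegral_congr_fun measurableSet_Ioi fun τ hτ => ?_
      simp_rw [mul_assoc, integral_const_mul, integral_comp_smul_mul μ g F hτ, mul_left_comm (g _),
        integral_const_mul]
    _ = ∫ v, (∫ τ in Ioi 0, g v * (Γ τ * τ ^ (-(finrank ℝ E : ℝ)) * F (τ⁻¹ • v))) ∂μ :=
      (integral_integral_swap (integrable_prod_mul_comp_inv_smul μ hΓm hΓ hg hgM hFm hF)).symm
    _ = _ := by simp_rw [integral_const_mul]

end Scaling

section HalfSpace

variable {E : Type*} [NormedAddCommGroup E] [NormedSpace ℝ E] (ℓ : E →L[ℝ] ℝ)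

noncomputable def exitTime (x w : E) : ℝ := -ℓ x / ℓ w

/-- The paper's `ψ̃(x + w, w)` for the half-space `Ω = {ℓ > 0}`. -/
noncomputable def boundaryExtension (ψ : E → ℝ) (x w : E) : ℝ :=
  if 0 < ℓ (x + w) then ψ (x + w) else ψ (x + exitTime ℓ x w • w)

theorem exitTime_smul_smul (x w : E) {c : ℝ} (hc : c ≠ 0) :
    exitTime ℓ x (c • w) • c • w = exitTime ℓ x w • w := by
  rcases eq_or_ne (ℓ w) 0 with hw | hw
  · simp [exitTime, hw]
  · rw [exitTime, exitTime, smul_smul, map_smul, smul_eq_mul]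
    congr 1
    field_simp

theorem measurable_boundaryExtension [MeasurableSpace E] [BorelSpace E] {ψ : E → ℝ}
    (hψ : Measurable ψ) (x : E) : Measurable (boundaryExtension ℓ ψ x) :=
  Measurable.ite (measurableSet_lt measurable_const (by fun_prop)) (by fun_prop)
    (hψ.comp (by unfold exitTime; fun_prop))

theorem abs_boundaryExtension_le {ψ : E → ℝ} {M : ℝ} (hψM : ∀ z, |ψ z| ≤ M) (x w : E) :
    |boundaryExtension ℓ ψ x w| ≤ M := by
  unfold boundaryExtension
  split_ifs <;> exact hψM _

theorem integral_inside_add_exit_eq_integral_boundaryExtension [MeasurableSpace E] [BorelSpace E]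
    {x : E} (hx : 0 < ℓ x) (w : E) {Γ : ℝ → ℝ} (hΓ : IntegrableOn Γ (Ioi 0)) {ψ : E → ℝ}
    (hψ : Measurable ψ) {M : ℝ} (hψM : ∀ z, |ψ z| ≤ M) :
    (∫ τ in {τ : ℝ | 0 < τ ∧ 0 < ℓ (x + τ • w)}, Γ τ * (ψ (x + τ • w) - ψ x))
        + (if ℓ w < 0 then
            (∫ τ in Ioi (exitTime ℓ x w), Γ τ) * (ψ (x + exitTime ℓ x w • w) - ψ x) else 0)
      = ∫ τ in Ioi 0, Γ τ * (boundaryExtension ℓ ψ x (τ • w) - ψ x) := by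
  have hint : IntegrableOn (fun τ => Γ τ * (boundaryExtension ℓ ψ x (τ • w) - ψ x)) (Ioi 0) := by
    refine hΓ.mul_bdd (c := M + M) ?_ (ae_of_all _ fun τ => ?_)
    · exact ((measurable_boundaryExtension ℓ hψ x).comp (measurable_id.smul_const w)).sub_const _
        |>.aestronglyMeasurable
    · exact (abs_sub _ _).trans (add_le_add (abs_boundaryExtension_le ℓ hψM x _) (hψM x))
  have hℓ : ∀ τ : ℝ, ℓ (x + τ • w) = ℓ x + τ * ℓ w := by simp
  rcases lt_or_ge (ℓ w) 0 with hw | hw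
  · set T := exitTime ℓ x w
    have hT : 0 < T := div_pos_of_neg_of_neg (neg_lt_zero.2 hx) hw
    have hinside : ∀ τ, 0 < ℓ (x + τ • w) ↔ τ < T := fun τ => by
      rw [hℓ, show T = -ℓ x / ℓ w from rfl, lt_div_iff_of_neg hw]
      constructor <;> intro h <;> linarith
    have hset : {τ : ℝ | 0 < τ ∧ 0 < ℓ (x + τ • w)} = Ioo 0 T := by
      ext τ; exact and_congr_right' (hinside τ)
    rw [if_pos hw, hset, ← Ioc_union_Ioi_eq_Ioi hT.le, setIntegral_union (Ioc_disjoint_Ioi le_rfl)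
      measurableSet_Ioi (hint.mono_set Ioc_subset_Ioi_self) (hint.mono_set (Ioi_subset_Ioi hT.le)),
      integral_Ioc_eq_integral_Ioo, ← integral_mul_const]
    congr 1
    · refine setIntegral_congr_fun measurableSet_Ioo fun τ hτ => ?_
      rw [boundaryExtension, if_pos ((hinside τ).2 hτ.2)]
    · refine setIntegral_congr_fun measurableSet_Ioi fun τ hτ => ?_
      rw [boundaryExtension, if_neg (by rw [hinside]; exact not_lt.2 (le_of_lt hτ)),
        exitTime_smul_smul ℓ x w (hT.trans hτ).ne']
  · have hinside : ∀ τ : ℝ, 0 < τ → 0 < ℓ (x + τ • w) := fun τ hτ => by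
      rw [hℓ]; nlinarith
    have hset : {τ : ℝ | 0 < τ ∧ 0 < ℓ (x + τ • w)} = Ioi 0 := by
      ext τ; simpa using hinside τ
    rw [if_neg (not_lt.2 hw), add_zero, hset]
    refine setIntegral_congr_fun measurableSet_Ioi fun τ hτ => ?_
    rw [boundaryExtension, if_pos (hinside τ hτ)]

end HalfSpace

theorem stmt17_general (d : ℕ) (ν₀ ε : ℝ) (hν : 0 < ν₀) (hε : 0 < ε)
    (ψ : EuclideanSpace ℝ (Fin (d+1)) → ℝ) (hψm : Measurable ψ)
    (hψb : ∃ M, ∀ z, |ψ z| ≤ M)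
    (F : EuclideanSpace ℝ (Fin (d+1)) → ℝ) (hFm : Measurable F)
    (hFi : Integrable F)
    (F₁ : EuclideanSpace ℝ (Fin (d+1)) → ℝ)
    (hF₁ : ∀ v, F₁ v = ∫ τ in Set.Ioi (0:ℝ),
      Real.exp (-ν₀ * τ) * ν₀ ^ 2 * τ ^ (-((d:ℝ) + 1)) * F (τ⁻¹ • v)) :
    (∀ x v : EuclideanSpace ℝ (Fin (d+1)), 0 < x (Fin.last d) → v (Fin.last d) < 0 →
      ν₀ * Real.exp (-ν₀ * (-(x (Fin.last d)) / (ε * v (Fin.last d))))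
        = ∫ τ in Set.Ioi (-(x (Fin.last d)) / (ε * v (Fin.last d))),
            ν₀ ^ 2 * Real.exp (-ν₀ * τ)) ∧
    (∀ x : EuclideanSpace ℝ (Fin (d+1)), 0 < x (Fin.last d) →
      ∫ v : EuclideanSpace ℝ (Fin (d+1)),
        ((∫ τ in {τ : ℝ | 0 < τ ∧ 0 < (x + (ε * τ) • v) (Fin.last d)},
            ν₀ ^ 2 * Real.exp (-ν₀ * τ) * (ψ (x + (ε * τ) • v) - ψ x))
          + (if v (Fin.last d) < 0 then
              ν₀ * Real.exp (-ν₀ * (-(x (Fin.last d)) / (ε * v (Fin.last d)))) *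
                (ψ (x + (-(x (Fin.last d)) / (ε * v (Fin.last d))) • (ε • v)) - ψ x)
            else 0)) * F v
      = ∫ v : EuclideanSpace ℝ (Fin (d+1)),
          ((if 0 < (x + ε • v) (Fin.last d) then ψ (x + ε • v)
            else ψ (x + (-(x (Fin.last d)) / (ε * v (Fin.last d))) • (ε • v))) - ψ x)
            * F₁ v) := by
  refine ⟨fun x v _ _ => (integral_Ioi_sq_mul_exp_neg_mul hν _).symm, fun x hx => ?_⟩
  obtain ⟨M, hM⟩ := hψb
  let ℓ := EuclideanSpace.proj (𝕜 := ℝ) (Fin.last d)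
  let Γ : ℝ → ℝ := fun τ => ν₀ ^ 2 * exp (-ν₀ * τ)
  let g := fun u => boundaryExtension ℓ ψ x (ε • u) - ψ x
  have hΓ : IntegrableOn Γ (Ioi 0) := (exp_neg_integrableOn_Ioi 0 hν).const_mul _
  have hg : Measurable g :=
    ((measurable_boundaryExtension ℓ hψm x).comp (measurable_const_smul ε)).sub_const _
  have hgM : ∀ u, |g u| ≤ M + M := fun u =>
    (abs_sub _ _).trans (add_le_add (abs_boundaryExtension_le ℓ hM x _) (hM x))
  calc _ = ∫ v, (∫ τ in Ioi 0, Γ τ * g (τ • v)) * F v := by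
        refine integral_congr_ae (ae_of_all _ fun v => congrArg (· * F v) ?_)
        have h := integral_inside_add_exit_eq_integral_boundaryExtension ℓ hx (ε • v) hΓ hψm hM
        rw [integral_Ioi_sq_mul_exp_neg_mul hν] at h
        have hray : ∀ τ : ℝ, (ε * τ) • v = τ • ε • v := fun τ => by rw [mul_comm, mul_smul]
        have hdown : v (Fin.last d) < 0 ↔ ℓ (ε • v) < 0 := by
          simp [ℓ, mul_neg_iff, hε, hε.not_gt]
        simp only [hray, hdown, g, smul_comm ε]
        exact h
    _ = ∫ v, g v * (∫ τ in Ioi 0, Γ τ * τ ^ (-(finrank ℝ (EuclideanSpace ℝ (Fin (d+1))) : ℝ))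
          * F (τ⁻¹ • v)) :=
        integral_setIntegral_comp_smul_mul volume (by fun_prop) hΓ hg hgM hFm hFi
    _ = _ := by
        refine integral_congr_ae (ae_of_all _ fun v => congrArg (g v * ·) ?_)
        rw [hF₁, finrank_euclideanSpace_fin]
        refine setIntegral_congr_fun measurableSet_Ioi fun τ _ => ?_
        push_cast
        ring

/-- Exit-time identity `ν₀ e^{-ν₀ τ_f^ε} = ∫_{τ_f^ε}^∞ ν₀² e^{-ν₀τ} dτ` and the resulting
equality of the bulk-plus-exit-point operator with the extension-based operator `L^ε`
in the half-space `Ω = {x_{d+1} > 0}`. -/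
theorem stmt17 (d : ℕ) (s ν₀ ε : ℝ) (hs : s ∈ Set.Ioo (0:ℝ) 1) (hν : 0 < ν₀) (hε : 0 < ε)
    (ψ : EuclideanSpace ℝ (Fin (d+1)) → ℝ) (hψm : Measurable ψ)
    (hψb : ∃ M, ∀ z, |ψ z| ≤ M)
    (F : EuclideanSpace ℝ (Fin (d+1)) → ℝ) (hFm : Measurable F) (hFpos : ∀ v, 0 ≤ F v)
    (hFi : Integrable F) (hFint : ∫ v, F v = 1)
    (F₁ : EuclideanSpace ℝ (Fin (d+1)) → ℝ)
    (hF₁ : ∀ v, F₁ v = ∫ τ in Set.Ioi (0:ℝ),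
      Real.exp (-ν₀ * τ) * ν₀ ^ 2 * τ ^ (-((d:ℝ) + 1)) * F (τ⁻¹ • v)) :
    (∀ x v : EuclideanSpace ℝ (Fin (d+1)), 0 < x (Fin.last d) → v (Fin.last d) < 0 →
      ν₀ * Real.exp (-ν₀ * (-(x (Fin.last d)) / (ε * v (Fin.last d))))
        = ∫ τ in Set.Ioi (-(x (Fin.last d)) / (ε * v (Fin.last d))),
            ν₀ ^ 2 * Real.exp (-ν₀ * τ)) ∧
    (∀ x : EuclideanSpace ℝ (Fin (d+1)), 0 < x (Fin.last d) →
      ∫ v : EuclideanSpace ℝ (Fin (d+1)),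
        ((∫ τ in {τ : ℝ | 0 < τ ∧ 0 < (x + (ε * τ) • v) (Fin.last d)},
            ν₀ ^ 2 * Real.exp (-ν₀ * τ) * (ψ (x + (ε * τ) • v) - ψ x))
          + (if v (Fin.last d) < 0 then
              ν₀ * Real.exp (-ν₀ * (-(x (Fin.last d)) / (ε * v (Fin.last d)))) *
                (ψ (x + (-(x (Fin.last d)) / (ε * v (Fin.last d))) • (ε • v)) - ψ x)
            else 0)) * F v
      = ∫ v : EuclideanSpace ℝ (Fin (d+1)),
          ((if 0 < (x + ε • v) (Fin.last d) then ψ (x + ε • v)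
            else ψ (x + (-(x (Fin.last d)) / (ε * v (Fin.last d))) • (ε • v))) - ψ x)
            * F₁ v) :=
  stmt17_general d ν₀ ε hν hε ψ hψm hψb F hFm hFi F₁ hF₁
end

section
/- Let Ω = ℝ^d_+, ν₀ > 0, ε ∈ (0,1), and let ρ ∈ L²(Ω). Define for y ∈ ∂Ω the averaged trace T_ε ρ(y) = c₀ ∫_{w_d>0} ∫₀^∞ ν₀ e^{-ν₀τ} ρ(y + ετ w) F(w) w_d dτ dw, where F is a probability density with finite first moment and c₀ = (∫_{w_d>0} F(w) w_d dw)^{-1}. Then ∫_{∂Ω} |T_ε ρ(y)|² dσ(y) ≤ ε^{-1} ν₀ c₀' ‖ρ‖²_{L²(Ω)} for a constant c₀' depending only on ν₀, F. -/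
open MeasureTheory Real Set ENNReal ProbabilityTheory

/-!
Jensen's inequality for the probability measure `c₀ ν₀ e^{-ν₀τ} F(w) w_d dτ dw` (as two
Cauchy–Schwarz steps, in `τ` and then in `w`), followed by `e^{-ν₀τ} ≤ 1`, bounds `|T_ε ρ(y)|²`
by `c₀ ν₀ ∫∫ ρ(y + ετw)² F(w) w_d dτ dw`. For fixed `w`, the map `(y, τ) ↦ y + ετw` onto the
half-space has Jacobian `ε w_d`, so the `(y, τ)`-integral of `ρ(y + ετw)²` is at most
`‖ρ‖² / (ε w_d)`. The factor `w_d` cancels and `∫ F = 1` leaves `ε⁻¹ ν₀ c₀ ‖ρ‖²`.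
-/

theorem lintegral_mul_sq_le {α : Type*} [MeasurableSpace α] {μ : Measure α} {f g : α → ℝ≥0∞}
    (hf : AEMeasurable f μ) (hg : AEMeasurable g μ) :
    (∫⁻ x, g x * f x ∂μ) ^ 2 ≤ (∫⁻ x, g x ∂μ) * ∫⁻ x, g x * f x ^ 2 ∂μ := by
  have sqrt_sq : ∀ x : ℝ≥0∞, (x ^ 2) ^ (2⁻¹ : ℝ) = x := by
    exact_mod_cast ENNReal.pow_rpow_inv_natCast two_ne_zero
  have holder := ENNReal.lintegral_mul_norm_pow_le hg (hg.mul (hf.pow_const 2))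
    (p := 2⁻¹) (q := 2⁻¹) (by norm_num) (by norm_num) (by norm_num)
  have integrand : ∀ x, g x ^ (2⁻¹ : ℝ) * (g x * f x ^ 2) ^ (2⁻¹ : ℝ) = g x * f x := fun x => by
    rw [← ENNReal.mul_rpow_of_nonneg _ _ (by norm_num), ← sqrt_sq (g x * f x)]
    ring_nf
  simp only [Pi.mul_apply, integrand] at holder
  calc (∫⁻ x, g x * f x ∂μ) ^ 2
      ≤ ((∫⁻ x, g x ∂μ) ^ (2⁻¹ : ℝ) * (∫⁻ x, g x * f x ^ 2 ∂μ) ^ (2⁻¹ : ℝ)) ^ 2 := by gcongr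
    _ = _ := by
      rw [mul_pow]
      exact_mod_cast congrArg₂ (· * ·) (ENNReal.rpow_inv_natCast_pow two_ne_zero _)
        (ENNReal.rpow_inv_natCast_pow two_ne_zero _)

theorem setLIntegral_Ioi_exp_weight_le_one {b : ℝ} (hb : 0 < b) :
    ∫⁻ τ in Ioi (0 : ℝ), ‖b * exp (-b * τ)‖ₑ ≤ 1 := by
  calc ∫⁻ τ in Ioi (0 : ℝ), ‖b * exp (-b * τ)‖ₑ = ∫⁻ τ in Ioi (0 : ℝ), exponentialPDF b τ := by
        refine setLIntegral_congr_fun measurableSet_Ioi fun τ hτ => ?_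
        rw [exponentialPDF_of_nonneg (le_of_lt hτ), Real.enorm_of_nonneg (by positivity), neg_mul]
    _ ≤ ∫⁻ τ, exponentialPDF b τ := setLIntegral_le_lintegral _ _
    _ = 1 := lintegral_exponentialPDF_eq_one hb

theorem lintegral_comp_mul_left_of_pos {f : ℝ → ℝ≥0∞} (hf : Measurable f) {c : ℝ} (hc : 0 < c) :
    ∫⁻ x, f (c * x) = ENNReal.ofReal c⁻¹ * ∫⁻ x, f x := by
  rw [← lintegral_map hf (measurable_const_mul c), Real.map_volume_mul_left hc.ne',
    lintegral_smul_measure, abs_of_pos (inv_pos.2 hc), smul_eq_mul]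

def upperHalfSpace (E : Type*) : Set (E × ℝ) := {w | 0 < w.2}

theorem measurableSet_upperHalfSpace {E : Type*} [MeasurableSpace E] :
    MeasurableSet (upperHalfSpace E) :=
  measurable_snd measurableSet_Ioi

section HalfSpace

variable {E : Type*} [AddCommGroup E] [Module ℝ E]

theorem prodMk_zero_add_smul (y : E) (t : ℝ) (w : E × ℝ) :
    ((y, 0) + t • w : E × ℝ) = (y + t • w.1, t * w.2) :=
  Prod.ext rfl (zero_add _)

variable [MeasureSpace E]

/-- `T_ε ρ(y)`, with `c₀` written as the reciprocal of the denominator. -/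
noncomputable def averagedTrace (ν₀ ε : ℝ) (F ρ : E × ℝ → ℝ) (y : E) : ℝ :=
  (∫ w in upperHalfSpace E,
      (∫ τ in Ioi (0 : ℝ), ν₀ * exp (-ν₀ * τ) * ρ ((y, 0) + (ε * τ) • w)) * F w * w.2) /
    ∫ w in upperHalfSpace E, F w * w.2

theorem measurable_ray [MeasurableAdd₂ E] [MeasurableSMul₂ ℝ E] (ε : ℝ) :
    Measurable fun p : (E × (E × ℝ)) × ℝ => ((p.1.1, 0) + (ε * p.2) • p.1.2 : E × ℝ) := by
  simp only [prodMk_zero_add_smul]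
  fun_prop

theorem setLIntegral_Ioi_lintegral_translate_le [MeasurableAdd E] [SFinite (volume : Measure E)]
    [(volume : Measure E).IsAddRightInvariant] {q : E × ℝ → ℝ≥0∞} (hq : Measurable q)
    {w : E × ℝ} (hw : 0 < w.2) :
    ∫⁻ τ in Ioi (0 : ℝ), ∫⁻ y : E, q ((y, 0) + τ • w) ≤ ENNReal.ofReal w.2⁻¹ * ∫⁻ z, q z := by
  set G : ℝ → ℝ≥0∞ := fun s => ∫⁻ u, q (u, s)
  have slice : ∀ τ : ℝ, ∫⁻ y : E, q ((y, 0) + τ • w) = G (w.2 * τ) := fun τ => by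
    simp only [prodMk_zero_add_smul, mul_comm τ]
    exact lintegral_add_right_eq_self (fun u => q (u, w.2 * τ)) (τ • w.1)
  calc ∫⁻ τ in Ioi (0 : ℝ), ∫⁻ y : E, q ((y, 0) + τ • w) = ∫⁻ τ in Ioi (0 : ℝ), G (w.2 * τ) := by
        simp only [slice]
    _ ≤ ∫⁻ τ, G (w.2 * τ) := setLIntegral_le_lintegral _ _
    _ = ENNReal.ofReal w.2⁻¹ * ∫⁻ s, G s :=
        lintegral_comp_mul_left_of_pos hq.lintegral_prod_left' hw
    _ = ENNReal.ofReal w.2⁻¹ * ∫⁻ z, q z := by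
        rw [Measure.volume_eq_prod, lintegral_prod_symm' _ hq]

variable [MeasurableAdd₂ E] [MeasurableSMul₂ ℝ E] {ν₀ ε : ℝ} {F ρ : E × ℝ → ℝ}

theorem enorm_integral_ray_sq_le (hν : 0 < ν₀) (hFpos : ∀ w, 0 ≤ F w)
    (hFmom : IntegrableOn (fun w => F w * w.2) (upperHalfSpace E)) (hρ : Measurable ρ) (y : E) :
    ‖∫ w in upperHalfSpace E,
        (∫ τ in Ioi (0 : ℝ), ν₀ * exp (-ν₀ * τ) * ρ ((y, 0) + (ε * τ) • w)) * F w * w.2‖ₑ ^ 2 ≤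
      ENNReal.ofReal (∫ w in upperHalfSpace E, F w * w.2) * ENNReal.ofReal ν₀ *
        ∫⁻ w in upperHalfSpace E,
          ‖F w * w.2‖ₑ * ∫⁻ τ in Ioi (0 : ℝ), ‖ρ ((y, 0) + (ε * τ) • w)‖ₑ ^ 2 := by
  set H := upperHalfSpace E
  set a : E × ℝ → ℝ → ℝ≥0∞ := fun w τ => ‖ρ ((y, 0) + (ε * τ) • w)‖ₑ
  set wgt : ℝ → ℝ≥0∞ := fun τ => ‖ν₀ * exp (-ν₀ * τ)‖ₑ
  set m : E × ℝ → ℝ≥0∞ := fun w => ‖F w * w.2‖ₑ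
  have ha : Measurable fun p : (E × ℝ) × ℝ => a p.1 p.2 :=
    (hρ.comp ((measurable_ray ε).comp
      ((measurable_const.prodMk measurable_fst).prodMk measurable_snd))).enorm
  have haw : ∀ w, Measurable (a w) := fun w => ha.comp measurable_prodMk_left
  have hwgt : Measurable wgt := by fun_prop
  have hm : AEMeasurable m (volume.restrict H) := hFmom.aestronglyMeasurable.enorm
  have mass : ∫⁻ w in H, m w = ENNReal.ofReal (∫ w in H, F w * w.2) := by
    rw [← ofReal_integral_norm_eq_lintegral_enorm hFmom]
    refine congrArg _ (setIntegral_congr_fun measurableSet_upperHalfSpace fun w hw => ?_)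
    exact Real.norm_of_nonneg (mul_nonneg (hFpos w) (le_of_lt hw))
  have triangle : ‖∫ w in H,
      (∫ τ in Ioi (0 : ℝ), ν₀ * exp (-ν₀ * τ) * ρ ((y, 0) + (ε * τ) • w)) * F w * w.2‖ₑ ≤
      ∫⁻ w in H, m w * ∫⁻ τ in Ioi (0 : ℝ), wgt τ * a w τ := by
    refine (enorm_integral_le_lintegral_enorm _).trans (lintegral_mono fun w => ?_)
    rw [mul_assoc, enorm_mul, mul_comm]
    gcongr
    refine (enorm_integral_le_lintegral_enorm _).trans_eq (lintegral_congr fun τ => ?_)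
    exact enorm_mul _ _
  have inner : ∀ w, (∫⁻ τ in Ioi (0 : ℝ), wgt τ * a w τ) ^ 2 ≤
      ENNReal.ofReal ν₀ * ∫⁻ τ in Ioi (0 : ℝ), a w τ ^ 2 := fun w => calc
    _ ≤ (∫⁻ τ in Ioi (0 : ℝ), wgt τ) * ∫⁻ τ in Ioi (0 : ℝ), wgt τ * a w τ ^ 2 :=
        lintegral_mul_sq_le (haw w).aemeasurable hwgt.aemeasurable
    _ ≤ 1 * ∫⁻ τ in Ioi (0 : ℝ), ENNReal.ofReal ν₀ * a w τ ^ 2 := by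
        refine mul_le_mul' (setLIntegral_Ioi_exp_weight_le_one hν)
          (setLIntegral_mono' measurableSet_Ioi fun τ hτ => mul_le_mul_left ?_ _)
        change ‖ν₀ * exp (-ν₀ * τ)‖ₑ ≤ _
        rw [Real.enorm_of_nonneg (by positivity)]
        refine ENNReal.ofReal_le_ofReal (mul_le_of_le_one_right hν.le ?_)
        exact exp_le_one_iff.2 (by nlinarith [mem_Ioi.1 hτ])
    _ = ENNReal.ofReal ν₀ * ∫⁻ τ in Ioi (0 : ℝ), a w τ ^ 2 := by
        rw [one_mul, lintegral_const_mul _ ((haw w).pow_const 2)]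
  calc _ ≤ (∫⁻ w in H, m w * ∫⁻ τ in Ioi (0 : ℝ), wgt τ * a w τ) ^ 2 := by gcongr
    _ ≤ (∫⁻ w in H, m w) * ∫⁻ w in H, m w * (∫⁻ τ in Ioi (0 : ℝ), wgt τ * a w τ) ^ 2 :=
        lintegral_mul_sq_le
          (Measurable.lintegral_prod_right' ((hwgt.comp measurable_snd).mul ha)).aemeasurable hm
    _ ≤ (∫⁻ w in H, m w) *
          ∫⁻ w in H, m w * (ENNReal.ofReal ν₀ * ∫⁻ τ in Ioi (0 : ℝ), a w τ ^ 2) := by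
        gcongr with w
        exact inner w
    _ = _ := by
        simp only [mass, mul_left_comm (m _), mul_assoc]
        rw [lintegral_const_mul' _ _ ofReal_ne_top]

theorem enorm_averagedTrace_sq_le (hν : 0 < ν₀) (hFpos : ∀ w, 0 ≤ F w)
    (hFmom : IntegrableOn (fun w => F w * w.2) (upperHalfSpace E))
    (hFmompos : 0 < ∫ w in upperHalfSpace E, F w * w.2) (hρ : Measurable ρ) (y : E) :
    ‖averagedTrace ν₀ ε F ρ y‖ₑ ^ 2 ≤
      ENNReal.ofReal (∫ w in upperHalfSpace E, F w * w.2)⁻¹ * ENNReal.ofReal ν₀ *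
        ∫⁻ w in upperHalfSpace E,
          ‖F w * w.2‖ₑ * ∫⁻ τ in Ioi (0 : ℝ), ‖ρ ((y, 0) + (ε * τ) • w)‖ₑ ^ 2 := by
  set C := ∫ w in upperHalfSpace E, F w * w.2
  set X := ∫⁻ w in upperHalfSpace E,
    ‖F w * w.2‖ₑ * ∫⁻ τ in Ioi (0 : ℝ), ‖ρ ((y, 0) + (ε * τ) • w)‖ₑ ^ 2
  have cancel : ENNReal.ofReal C * ENNReal.ofReal C⁻¹ = 1 := by
    rw [← ofReal_mul hFmompos.le, mul_inv_cancel₀ hFmompos.ne', ofReal_one]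
  rw [averagedTrace, div_eq_mul_inv, enorm_mul, mul_pow,
    Real.enorm_of_nonneg (inv_nonneg.2 hFmompos.le)]
  calc _ ≤ ENNReal.ofReal C * ENNReal.ofReal ν₀ * X * ENNReal.ofReal C⁻¹ ^ 2 :=
        mul_le_mul_left (enorm_integral_ray_sq_le hν hFpos hFmom hρ y) _
    _ = ENNReal.ofReal C * ENNReal.ofReal C⁻¹ * (ENNReal.ofReal C⁻¹ * ENNReal.ofReal ν₀ * X) := by
        ring
    _ = _ := by rw [cancel, one_mul]

variable [SFinite (volume : Measure E)]

theorem measurable_averagedTrace (hFm : Measurable F) (hρ : Measurable ρ) :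
    Measurable (averagedTrace ν₀ ε F ρ) := by
  have hk : StronglyMeasurable fun p : E × (E × ℝ) =>
      ∫ τ in Ioi (0 : ℝ), ν₀ * exp (-ν₀ * τ) * ρ ((p.1, 0) + (ε * τ) • p.2) :=
    StronglyMeasurable.integral_prod_right' (Measurable.stronglyMeasurable <|
      (by fun_prop : Measurable fun p : (E × (E × ℝ)) × ℝ => ν₀ * exp (-ν₀ * p.2)).mul
        (hρ.comp (measurable_ray ε)))
  have hnum := StronglyMeasurable.integral_prod_right' (ν := volume.restrict (upperHalfSpace E))
    ((hk.mul (hFm.comp measurable_snd).stronglyMeasurable).mul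
      measurable_snd.snd.stronglyMeasurable)
  exact hnum.measurable.div_const _

theorem lintegral_upperHalfSpace_ray_le [(volume : Measure E).IsAddRightInvariant] (hε : 0 < ε)
    (hFm : Measurable F) (hFpos : ∀ w, 0 ≤ F w) (hFi : Integrable F) (hFint : ∫ w, F w = 1)
    {q : E × ℝ → ℝ≥0∞} (hq : Measurable q) :
    ∫⁻ y, ∫⁻ w in upperHalfSpace E,
        ‖F w * w.2‖ₑ * ∫⁻ τ in Ioi (0 : ℝ), q ((y, 0) + (ε * τ) • w) ≤
      ENNReal.ofReal ε⁻¹ * ∫⁻ z, q z := by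
  have hray : Measurable fun p : (E × (E × ℝ)) × ℝ => q ((p.1.1, 0) + (ε * p.2) • p.1.2) :=
    hq.comp (measurable_ray ε)
  have hm : Measurable fun w : E × ℝ => ‖F w * w.2‖ₑ := by fun_prop
  have mass_le : ∫⁻ w in upperHalfSpace E, ENNReal.ofReal (F w) ≤ 1 := by
    calc _ ≤ ∫⁻ w, ENNReal.ofReal (F w) := setLIntegral_le_lintegral _ _
      _ = 1 := by
        rw [← ofReal_integral_eq_lintegral_ofReal hFi (ae_of_all _ hFpos), hFint, ofReal_one]
  rw [lintegral_lintegral_swap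
    ((hm.comp measurable_snd).mul hray.lintegral_prod_right').aemeasurable]
  calc _ ≤ ∫⁻ w in upperHalfSpace E,
          ENNReal.ofReal ε⁻¹ * (∫⁻ z, q z) * ENNReal.ofReal (F w) := by
        refine setLIntegral_mono' measurableSet_upperHalfSpace fun w (hw : 0 < w.2) => ?_
        have hεw : 0 < (ε • w).2 := mul_pos hε hw
        have jacobian : ‖F w * w.2‖ₑ * ENNReal.ofReal (ε • w).2⁻¹ =
            ENNReal.ofReal ε⁻¹ * ENNReal.ofReal (F w) := by
          rw [Real.enorm_of_nonneg (mul_nonneg (hFpos w) hw.le), ← ofReal_mul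
            (mul_nonneg (hFpos w) hw.le), ← ofReal_mul (inv_nonneg.2 hε.le)]
          congr 1
          simp only [Prod.smul_snd, smul_eq_mul]
          field_simp
        have hshift : Measurable fun p : E × ℝ => q ((p.1, 0) + p.2 • (ε • w)) := by
          simp only [prodMk_zero_add_smul]
          exact hq.comp (by fun_prop)
        calc _ = ‖F w * w.2‖ₑ * ∫⁻ τ in Ioi (0 : ℝ), ∫⁻ y, q ((y, 0) + τ • (ε • w)) := by
              simp only [mul_comm ε, mul_smul]
              rw [lintegral_const_mul _ hshift.lintegral_prod_right',
                lintegral_lintegral_swap hshift.aemeasurable]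
          _ ≤ ‖F w * w.2‖ₑ * (ENNReal.ofReal (ε • w).2⁻¹ * ∫⁻ z, q z) := by
              gcongr
              exact setLIntegral_Ioi_lintegral_translate_le hq hεw
          _ = _ := by rw [← mul_assoc, jacobian, mul_right_comm]
    _ = ENNReal.ofReal ε⁻¹ * (∫⁻ z, q z) * ∫⁻ w in upperHalfSpace E, ENNReal.ofReal (F w) :=
        lintegral_const_mul _ hFm.ennreal_ofReal
    _ ≤ ENNReal.ofReal ε⁻¹ * ∫⁻ z, q z := mul_le_of_le_one_right' mass_le

theorem integral_averagedTrace_sq_le [(volume : Measure E).IsAddRightInvariant] (hν : 0 < ν₀)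
    (hFm : Measurable F) (hFpos : ∀ w, 0 ≤ F w) (hFi : Integrable F) (hFint : ∫ w, F w = 1)
    (hFmom : IntegrableOn (fun w => F w * w.2) (upperHalfSpace E))
    (hFmompos : 0 < ∫ w in upperHalfSpace E, F w * w.2) (hε : 0 < ε) (hρ : Measurable ρ)
    (hρ2 : MemLp ρ 2) :
    ∫ y, averagedTrace ν₀ ε F ρ y ^ 2 ≤
      ε⁻¹ * ν₀ * (∫ w in upperHalfSpace E, F w * w.2)⁻¹ * ∫ z, ρ z ^ 2 := by
  set C := ∫ w in upperHalfSpace E, F w * w.2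
  have ofReal_sq : ∀ x : ℝ, ENNReal.ofReal (x ^ 2) = ‖x‖ₑ ^ 2 := fun x => by
    rw [Real.enorm_eq_ofReal_abs, ← ofReal_pow (abs_nonneg x), sq_abs]
  have norm_sq : ∫⁻ z, ‖ρ z‖ₑ ^ 2 = ENNReal.ofReal (∫ z, ρ z ^ 2) := by
    rw [ofReal_integral_eq_lintegral_ofReal hρ2.integrable_sq (ae_of_all _ fun z => sq_nonneg _)]
    simp only [ofReal_sq]
  rw [integral_eq_lintegral_of_nonneg_ae (ae_of_all _ fun y => sq_nonneg _)
    ((measurable_averagedTrace hFm hρ).pow_const 2).aestronglyMeasurable]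
  refine ENNReal.toReal_le_of_le_ofReal (by positivity) ?_
  calc ∫⁻ y, ENNReal.ofReal (averagedTrace ν₀ ε F ρ y ^ 2)
      = ∫⁻ y, ‖averagedTrace ν₀ ε F ρ y‖ₑ ^ 2 := by simp only [ofReal_sq]
    _ ≤ ∫⁻ y, ENNReal.ofReal C⁻¹ * ENNReal.ofReal ν₀ * ∫⁻ w in upperHalfSpace E,
          ‖F w * w.2‖ₑ * ∫⁻ τ in Ioi (0 : ℝ), ‖ρ ((y, 0) + (ε * τ) • w)‖ₑ ^ 2 :=
        lintegral_mono fun y => enorm_averagedTrace_sq_le hν hFpos hFmom hFmompos hρ y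
    _ = ENNReal.ofReal C⁻¹ * ENNReal.ofReal ν₀ * ∫⁻ y, ∫⁻ w in upperHalfSpace E,
          ‖F w * w.2‖ₑ * ∫⁻ τ in Ioi (0 : ℝ), ‖ρ ((y, 0) + (ε * τ) • w)‖ₑ ^ 2 :=
        lintegral_const_mul' _ _ (mul_ne_top ofReal_ne_top ofReal_ne_top)
    _ ≤ ENNReal.ofReal C⁻¹ * ENNReal.ofReal ν₀ * (ENNReal.ofReal ε⁻¹ * ∫⁻ z, ‖ρ z‖ₑ ^ 2) := by
        gcongr
        exact lintegral_upperHalfSpace_ray_le hε hFm hFpos hFi hFint (by fun_prop)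
    _ = ENNReal.ofReal (ε⁻¹ * ν₀ * C⁻¹ * ∫ z, ρ z ^ 2) := by
        rw [norm_sq, ofReal_mul (by positivity), ofReal_mul (by positivity),
          ofReal_mul (by positivity)]
        ring

end HalfSpace

theorem stmt18_general (d : ℕ) (ν₀ : ℝ) (hν : 0 < ν₀)
    (F : (EuclideanSpace ℝ (Fin (d-1)) × ℝ) → ℝ) (hFm : Measurable F)
    (hFpos : ∀ w, 0 ≤ F w) (hFi : Integrable F) (hFint : ∫ w, F w = 1)
    (hFmom : MeasureTheory.IntegrableOn (fun w => F w * w.2)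
      {w : EuclideanSpace ℝ (Fin (d-1)) × ℝ | 0 < w.2})
    (hFmompos : 0 < ∫ w in {w : EuclideanSpace ℝ (Fin (d-1)) × ℝ | 0 < w.2}, F w * w.2) :
    ∃ c₀' > (0:ℝ), ∀ ε ∈ Set.Ioo (0:ℝ) 1,
      ∀ ρ : (EuclideanSpace ℝ (Fin (d-1)) × ℝ) → ℝ, Measurable ρ →
        MeasureTheory.MemLp ρ 2 (volume : MeasureTheory.Measure
          (EuclideanSpace ℝ (Fin (d-1)) × ℝ)) →
        ∫ y : EuclideanSpace ℝ (Fin (d-1)),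
          ((∫ w in {w : EuclideanSpace ℝ (Fin (d-1)) × ℝ | 0 < w.2},
              (∫ τ in Set.Ioi (0:ℝ), ν₀ * Real.exp (-ν₀ * τ) *
                ρ ((y, (0:ℝ)) + (ε * τ) • w)) * F w * w.2)
            / (∫ w in {w : EuclideanSpace ℝ (Fin (d-1)) × ℝ | 0 < w.2}, F w * w.2)) ^ 2
        ≤ ε⁻¹ * ν₀ * c₀' * ∫ z, ρ z ^ 2 :=
  ⟨_, inv_pos.2 hFmompos, fun _ hε _ hρ hρ2 =>
    integral_averagedTrace_sq_le hν hFm hFpos hFi hFint hFmom hFmompos hε.1 hρ hρ2⟩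

/-- Trace estimate: the averaged boundary trace `T_ε ρ` satisfies
`∫_{∂Ω} |T_ε ρ|² dσ ≤ ε⁻¹ ν₀ c₀' ‖ρ‖²_{L²(Ω)}`, with `∂Ω = ℝ^{d-1}` and
`Ω = ℝ^{d-1} × (0,∞)` represented as a product. -/
theorem stmt18 (d : ℕ) (hd : 1 ≤ d) (ν₀ : ℝ) (hν : 0 < ν₀)
    (F : (EuclideanSpace ℝ (Fin (d-1)) × ℝ) → ℝ) (hFm : Measurable F)
    (hFpos : ∀ w, 0 ≤ F w) (hFi : Integrable F) (hFint : ∫ w, F w = 1)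
    (hFmom : MeasureTheory.IntegrableOn (fun w => F w * w.2)
      {w : EuclideanSpace ℝ (Fin (d-1)) × ℝ | 0 < w.2})
    (hFmompos : 0 < ∫ w in {w : EuclideanSpace ℝ (Fin (d-1)) × ℝ | 0 < w.2}, F w * w.2) :
    ∃ c₀' > (0:ℝ), ∀ ε ∈ Set.Ioo (0:ℝ) 1,
      ∀ ρ : (EuclideanSpace ℝ (Fin (d-1)) × ℝ) → ℝ, Measurable ρ →
        MeasureTheory.MemLp ρ 2 (volume : MeasureTheory.Measure
          (EuclideanSpace ℝ (Fin (d-1)) × ℝ)) →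
        ∫ y : EuclideanSpace ℝ (Fin (d-1)),
          ((∫ w in {w : EuclideanSpace ℝ (Fin (d-1)) × ℝ | 0 < w.2},
              (∫ τ in Set.Ioi (0:ℝ), ν₀ * Real.exp (-ν₀ * τ) *
                ρ ((y, (0:ℝ)) + (ε * τ) • w)) * F w * w.2)
            / (∫ w in {w : EuclideanSpace ℝ (Fin (d-1)) × ℝ | 0 < w.2}, F w * w.2)) ^ 2
        ≤ ε⁻¹ * ν₀ * c₀' * ∫ z, ρ z ^ 2 :=
  stmt18_general d ν₀ hν F hFm hFpos hFi hFint hFmom hFmompos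
end
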